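/- arXiv:1805.08045 — 4 statements merged into one kernel-verified Lean document; each statement's English description precedes it below -/
import Mathlib

section
/- Let Σ̃ = [[Σ + λ μ μ^T, λμ],[λμ^T, λ]] and consider the curve t ↦ Σ̃(Σ(t), μ(t), λ(t)) with Σ fixed (Σ' = 0), λ fixed (λ' = 0) and μ' arbitrary; then tr(Σ̃' Σ̃^{-1} Σ̃' Σ̃^{-1}) = 2λ (μ')^T Σ^{-1} μ'. -/
open Matrix

private lemma trace_fromBlocks_aux {n m : Type*} [Fintype n] [Fintype m]
    (A : Matrix n n ℝ) (B : Matrix n m ℝ) (C : Matrix m n ℝ) (D : Matrix m m ℝ) :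
    (fromBlocks A B C D).trace = A.trace + D.trace := by
  simp [Matrix.trace, Fintype.sum_sum_type, Matrix.diag]

private lemma one1_smul_aux (c : ℝ) :
    (Matrix.of fun (_ _ : Fin 1) => c) = c • (1 : Matrix (Fin 1) (Fin 1) ℝ) := by
  ext i j; fin_cases i; fin_cases j; simp

/-- For the curve `t ↦ Σ̃(t) = [[Σ + λ μ(t) μ(t)ᵀ, λμ(t)], [λμ(t)ᵀ, λ]]` with `Σ`
and `λ` fixed and only `μ` varying, the metric satisfies
`tr(Σ̃' Σ̃⁻¹ Σ̃' Σ̃⁻¹) = 2λ (μ')ᵀ Σ⁻¹ μ'` (the derivative `Σ̃'` is taken entrywise). -/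
theorem block_metric_mean_direction
    (M : ℕ) (S : Matrix (Fin M) (Fin M) ℝ) (hS : S.PosDef)
    (l : ℝ) (hl : 0 < l)
    (μ : ℝ → Fin M → ℝ) (dμ : Fin M → ℝ) (t₀ : ℝ)
    (hμ : ∀ i, HasDerivAt (fun t => μ t i) (dμ i) t₀)
    (St : ℝ → Matrix (Fin M ⊕ Fin 1) (Fin M ⊕ Fin 1) ℝ)
    (hSt : ∀ t, St t =
      Matrix.fromBlocks (S + l • (Matrix.replicateCol (Fin 1) (μ t) * Matrix.replicateRow (Fin 1) (μ t)))
        (l • Matrix.replicateCol (Fin 1) (μ t)) (l • Matrix.replicateRow (Fin 1) (μ t))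
        (l • (1 : Matrix (Fin 1) (Fin 1) ℝ)))
    (D : Matrix (Fin M ⊕ Fin 1) (Fin M ⊕ Fin 1) ℝ)
    (hD : ∀ i j, HasDerivAt (fun t => St t i j) (D i j) t₀) :
    (D * (St t₀)⁻¹ * D * (St t₀)⁻¹).trace = 2 * l * (dμ ⬝ᵥ S⁻¹.mulVec dμ) := by
  have hSi : S * S⁻¹ = 1 := mul_nonsing_inv _ hS.det_pos.ne'.isUnit
  -- identify the derivative matrix
  have hD' : D = Matrix.fromBlocks
      (l • (Matrix.replicateCol (Fin 1) dμ * Matrix.replicateRow (Fin 1) (μ t₀) +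
            Matrix.replicateCol (Fin 1) (μ t₀) * Matrix.replicateRow (Fin 1) dμ))
      (l • Matrix.replicateCol (Fin 1) dμ) (l • Matrix.replicateRow (Fin 1) dμ) 0 := by
    ext i j
    cases i with
    | inl i =>
      cases j with
      | inl j =>
        have h1 : HasDerivAt (fun t => St t (Sum.inl i) (Sum.inl j))
            (l * (dμ i * μ t₀ j + μ t₀ i * dμ j)) t₀ := by
          have : ∀ t, St t (Sum.inl i) (Sum.inl j) = S i j + l * (μ t i * μ t j) := by
            intro t; rw [hSt t]; simp [Matrix.replicateCol, Matrix.replicateRow, Matrix.mul_apply]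
          simp only [this]
          exact (((hμ i).mul (hμ j)).const_mul l).const_add (S i j)
        have := (hD _ _).unique h1
        simp [this, Matrix.replicateCol, Matrix.replicateRow, Matrix.mul_apply, mul_comm]
        ring
      | inr j =>
        have h1 : HasDerivAt (fun t => St t (Sum.inl i) (Sum.inr j)) (l * dμ i) t₀ := by
          have : ∀ t, St t (Sum.inl i) (Sum.inr j) = l * μ t i := by
            intro t; rw [hSt t]; simp [Matrix.replicateCol]
          simp only [this]
          exact (hμ i).const_mul l
        have := (hD _ _).unique h1
        simp [this, Matrix.replicateCol]
    | inr i =>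
      cases j with
      | inl j =>
        have h1 : HasDerivAt (fun t => St t (Sum.inr i) (Sum.inl j)) (l * dμ j) t₀ := by
          have : ∀ t, St t (Sum.inr i) (Sum.inl j) = l * μ t j := by
            intro t; rw [hSt t]; simp [Matrix.replicateRow]
          simp only [this]
          exact (hμ j).const_mul l
        have := (hD _ _).unique h1
        simp [this, Matrix.replicateRow]
      | inr j =>
        have h1 : HasDerivAt (fun t => St t (Sum.inr i) (Sum.inr j)) 0 t₀ := by
          have : ∀ t, St t (Sum.inr i) (Sum.inr j) = l * (1 : Matrix (Fin 1) (Fin 1) ℝ) i j := by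
            intro t; rw [hSt t]; simp
          simp only [this]
          exact hasDerivAt_const _ _
        have := (hD _ _).unique h1
        simp [this]
  -- the explicit inverse of the block matrix
  have hInv : (St t₀)⁻¹ =
      Matrix.fromBlocks S⁻¹ (-(S⁻¹ * Matrix.replicateCol (Fin 1) (μ t₀)))
        (-(Matrix.replicateRow (Fin 1) (μ t₀) * S⁻¹))
        (l⁻¹ • 1 + Matrix.replicateRow (Fin 1) (μ t₀) * S⁻¹ * Matrix.replicateCol (Fin 1) (μ t₀)) := by
    rw [hSt t₀]
    apply inv_eq_right_inv
    rw [fromBlocks_multiply]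
    have h11 : (S + l • (replicateCol (Fin 1) (μ t₀) * replicateRow (Fin 1) (μ t₀))) * S⁻¹ +
        l • replicateCol (Fin 1) (μ t₀) * -(replicateRow (Fin 1) (μ t₀) * S⁻¹) = 1 := by
      simp only [Matrix.add_mul, Matrix.mul_add, Matrix.smul_mul, Matrix.mul_smul,
        Matrix.mul_neg, Matrix.neg_mul, ← Matrix.mul_assoc, hSi,
        Matrix.mul_one, Matrix.one_mul, smul_neg]
      abel
    have h12 : (S + l • (replicateCol (Fin 1) (μ t₀) * replicateRow (Fin 1) (μ t₀))) *
          -(S⁻¹ * replicateCol (Fin 1) (μ t₀)) +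
        l • replicateCol (Fin 1) (μ t₀) *
          (l⁻¹ • 1 + replicateRow (Fin 1) (μ t₀) * S⁻¹ * replicateCol (Fin 1) (μ t₀)) = 0 := by
      simp only [Matrix.add_mul, Matrix.mul_add, Matrix.smul_mul, Matrix.mul_smul,
        Matrix.mul_neg, Matrix.neg_mul, ← Matrix.mul_assoc, hSi,
        Matrix.mul_one, Matrix.one_mul, smul_neg, smul_smul,
        inv_mul_cancel₀ hl.ne', mul_inv_cancel₀ hl.ne', one_smul, smul_add]
      abel
    have h21 : l • replicateRow (Fin 1) (μ t₀) * S⁻¹ +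
        l • (1 : Matrix (Fin 1) (Fin 1) ℝ) * -(replicateRow (Fin 1) (μ t₀) * S⁻¹) = 0 := by
      simp only [Matrix.smul_mul, Matrix.mul_neg, ← Matrix.mul_assoc, Matrix.one_mul, smul_neg]
      abel
    have h22 : l • replicateRow (Fin 1) (μ t₀) * -(S⁻¹ * replicateCol (Fin 1) (μ t₀)) +
        l • (1 : Matrix (Fin 1) (Fin 1) ℝ) *
          (l⁻¹ • 1 + replicateRow (Fin 1) (μ t₀) * S⁻¹ * replicateCol (Fin 1) (μ t₀)) = 1 := by
      simp only [Matrix.mul_add, Matrix.smul_mul, Matrix.mul_smul, Matrix.mul_neg,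
        ← Matrix.mul_assoc, Matrix.mul_one, Matrix.one_mul, smul_neg, smul_smul,
        inv_mul_cancel₀ hl.ne', mul_inv_cancel₀ hl.ne', one_smul]
      abel
    rw [h11, h12, h21, h22, fromBlocks_one]
  rw [hD', hInv]
  -- abbreviations
  set T := S⁻¹ with hT
  set u := Matrix.replicateCol (Fin 1) (μ t₀) with hu
  set v := Matrix.replicateRow (Fin 1) (μ t₀) with hv
  set d := Matrix.replicateCol (Fin 1) dμ with hd
  set e := Matrix.replicateRow (Fin 1) dμ with he
  set q : ℝ := dμ ⬝ᵥ T *ᵥ dμ with hq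
  set c : ℝ := dμ ⬝ᵥ T *ᵥ (μ t₀) with hc
  have heTu : e * T * u = c • (1 : Matrix (Fin 1) (Fin 1) ℝ) := by
    rw [Matrix.mul_assoc, ← Matrix.replicateCol_mulVec, he, Matrix.replicateRow_mul_replicateCol, one1_smul_aux,
      hc, dotProduct_mulVec]
  have hueTu : u * e * T * u = c • u := by
    rw [Matrix.mul_assoc, Matrix.mul_assoc, ← Matrix.mul_assoc e, heTu,
      Matrix.mul_smul, Matrix.mul_one]
  have htru : (u * e * T).trace = c := by
    rw [Matrix.mul_assoc, ← Matrix.replicateRow_vecMul, hu]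
    refine (trace_replicateCol_mul_replicateRow (ι := Fin 1) _ _).trans ?_
    rw [dotProduct_comm, ← dotProduct_mulVec, hc]
  have htrd : (d * e * T).trace = q := by
    rw [Matrix.mul_assoc, ← Matrix.replicateRow_vecMul, hd]
    refine (trace_replicateCol_mul_replicateRow (ι := Fin 1) _ _).trans ?_
    rw [dotProduct_comm, ← dotProduct_mulVec, hq]
  have htred : (e * T * d).trace = q := by
    rw [Matrix.trace_mul_cycle, htrd]
  -- the product of the first two factors
  have hP : (Matrix.fromBlocks (l • (d * v + u * e)) (l • d) (l • e) 0) *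
      (Matrix.fromBlocks T (-(T * u)) (-(v * T)) (l⁻¹ • 1 + v * T * u)) =
      Matrix.fromBlocks (l • (u * e * T)) (d - (l * c) • u) (l • (e * T))
        ((-(l * c)) • 1) := by
    rw [fromBlocks_multiply]
    have h11 : l • (d * v + u * e) * T + l • d * -(v * T) = l • (u * e * T) := by
      simp only [Matrix.add_mul, Matrix.smul_mul, Matrix.mul_neg, Matrix.neg_mul,
        ← Matrix.mul_assoc, smul_neg, smul_add]
      abel
    have h12 : l • (d * v + u * e) * -(T * u) + l • d * (l⁻¹ • 1 + v * T * u) =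
        d - (l * c) • u := by
      simp only [Matrix.add_mul, Matrix.mul_add, Matrix.smul_mul, Matrix.mul_smul,
        Matrix.mul_neg, Matrix.neg_mul, ← Matrix.mul_assoc, hueTu, smul_neg, smul_add,
        smul_smul, mul_inv_cancel₀ hl.ne', inv_mul_cancel₀ hl.ne', one_smul, Matrix.mul_one]
      abel
    have h21 : l • e * T + (0 : Matrix (Fin 1) (Fin 1) ℝ) * -(v * T) = l • (e * T) := by
      simp [Matrix.smul_mul]
    have h22 : l • e * -(T * u) + (0 : Matrix (Fin 1) (Fin 1) ℝ) *
        (l⁻¹ • 1 + v * T * u) = (-(l * c)) • 1 := by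
      simp only [Matrix.smul_mul, Matrix.mul_neg, ← Matrix.mul_assoc, heTu, smul_neg,
        smul_smul, Matrix.zero_mul, add_zero, neg_smul]
    rw [h11, h12, h21, h22]
  rw [hP, Matrix.mul_assoc, hP, fromBlocks_multiply, trace_fromBlocks_aux]
  have hQ11 : (l • (u * e * T) * (l • (u * e * T)) + (d - (l * c) • u) * (l • (e * T))).trace
      = l * l * (c * c) + (l * q - l * (l * c) * c) := by
    simp only [Matrix.smul_mul, Matrix.mul_smul, Matrix.sub_mul, ← Matrix.mul_assoc,
      hueTu, smul_smul, smul_sub]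
    rw [Matrix.trace_add, Matrix.trace_smul, Matrix.trace_sub, Matrix.trace_smul,
      Matrix.trace_smul]
    rw [htru, htrd]; simp; ring
  have hQ22 : (l • (e * T) * (d - (l * c) • u) + (-(l * c)) • 1 * ((-(l * c)) • 1)).trace
      = (l * q - l * (l * c) * c) + (l * c) * (l * c) := by
    simp only [Matrix.smul_mul, Matrix.mul_smul, Matrix.mul_sub, ← Matrix.mul_assoc,
      heTu, smul_smul, smul_sub, Matrix.mul_one]
    rw [Matrix.trace_add, Matrix.trace_smul, Matrix.trace_sub, Matrix.trace_smul,
      Matrix.trace_smul]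
    rw [htred]; simp only [Matrix.trace_one, Fintype.card_fin, Nat.cast_one, smul_eq_mul]; ring
  rw [hQ11, hQ22]
  ring
end

section
/- If only λ varies (μ' = 0, Σ' = 0) in Σ̃ = [[Σ + λ μ μ^T, λμ],[λμ^T, λ]], then tr(Σ̃' Σ̃^{-1} Σ̃' Σ̃^{-1}) = (λ'/λ)^2. -/
/-!
Writing `v = (μ, 1)`, the matrix is `Σ̃(λ) = diag(Σ, 0) + λ v vᵀ`, so `Σ̃' = λ' v vᵀ` and the
trace collapses to `(λ' · vᵀ Σ̃⁻¹ v)²`. Since `Σ̃ (0, λ⁻¹) = v`, we get `vᵀ Σ̃⁻¹ v = λ⁻¹`; the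
inverse is a genuine one because `det Σ̃ = λ det Σ`, read off from the factorisation
`Σ̃ = [[1, μ], [0, 1]] · diag(Σ, λ) · [[1, 0], [μᵀ, 1]]`.
-/

open Matrix

theorem Matrix.trace_vecMulVec_mul_vecMulVec_mul {R n : Type*} [CommSemiring R] [Fintype n]
    (u v w x : n → R) (A B : Matrix n n R) :
    (vecMulVec u v * A * vecMulVec w x * B).trace = (v ⬝ᵥ A *ᵥ w) * (x ⬝ᵥ B *ᵥ u) := by
  rw [vecMulVec_mul, vecMulVec_mul_vecMulVec, vecMulVec_mul, trace_vecMulVec, smul_vecMul,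
    dotProduct_smul, smul_eq_mul, ← dotProduct_mulVec, dotProduct_mulVec x, dotProduct_comm u]

theorem eq_smul_of_hasDerivAt_apply {m n : Type*} {St : ℝ → Matrix m n ℝ} {C K D : Matrix m n ℝ}
    {l : ℝ → ℝ} {dl t₀ : ℝ} (hSt : ∀ t, St t = C + l t • K) (hl : HasDerivAt l dl t₀)
    (hD : ∀ i j, HasDerivAt (fun t => St t i j) (D i j) t₀) : D = dl • K := by
  ext i j
  refine (hD i j).unique ?_
  simpa [hSt] using (hl.mul_const (K i j)).const_add (C i j)

section BlockCov

variable {K m : Type*} [Field K]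

/-- The matrix `Σ̃` of the paper, with `λ = l`. -/
def blockCov (S : Matrix m m K) (μ : m → K) (l : K) : Matrix (m ⊕ Fin 1) (m ⊕ Fin 1) K :=
  fromBlocks (S + l • (replicateCol (Fin 1) μ * replicateRow (Fin 1) μ))
    (l • replicateCol (Fin 1) μ) (l • replicateRow (Fin 1) μ) (l • 1)

theorem blockCov_eq_add_smul_vecMulVec (S : Matrix m m K) (μ : m → K) (l : K) :
    blockCov S μ l = fromBlocks S 0 0 0 + l • vecMulVec (Sum.elim μ 1) (Sum.elim μ 1) := by
  ext (i | i) (j | j) <;>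
    simp [blockCov, mul_apply, vecMulVec_apply, one_apply, Fin.fin_one_eq_zero]

variable [Fintype m]

theorem blockCov_mulVec (S : Matrix m m K) (μ : m → K) {l : K} (hl : l ≠ 0) :
    blockCov S μ l *ᵥ Sum.elim (0 : m → K) (fun _ => l⁻¹) = Sum.elim μ 1 := by
  ext (i | i) <;> simp [blockCov, mulVec, dotProduct, Fin.fin_one_eq_zero] <;> field_simp

variable [DecidableEq m]

theorem blockCov_eq_mul (S : Matrix m m K) (μ : m → K) (l : K) :
    blockCov S μ l = fromBlocks 1 (replicateCol (Fin 1) μ) 0 1 * fromBlocks S 0 0 (l • 1) *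
      fromBlocks 1 0 (replicateRow (Fin 1) μ) 1 := by
  simp [blockCov, fromBlocks_multiply, Matrix.mul_smul, Matrix.smul_mul]

theorem det_blockCov (S : Matrix m m K) (μ : m → K) (l : K) :
    (blockCov S μ l).det = S.det * l := by
  simp [blockCov_eq_mul, det_fromBlocks_zero₂₁]

theorem dotProduct_inv_blockCov_mulVec {S : Matrix m m K} (hS : S.det ≠ 0) (μ : m → K) {l : K}
    (hl : l ≠ 0) :
    Sum.elim μ 1 ⬝ᵥ (blockCov S μ l)⁻¹ *ᵥ Sum.elim μ 1 = l⁻¹ := by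
  have hdet : IsUnit (blockCov S μ l).det := by simp [det_blockCov, hS, hl]
  have hu : (blockCov S μ l)⁻¹ *ᵥ Sum.elim μ 1 = Sum.elim (0 : m → K) (fun _ => l⁻¹) := by
    rw [← blockCov_mulVec S μ hl, mulVec_mulVec, nonsing_inv_mul _ hdet, one_mulVec]
  simp [hu, dotProduct, Fintype.sum_sum_type]

end BlockCov

/-- For the curve `t ↦ Σ̃(t) = [[Σ + λ(t) μ μᵀ, λ(t)μ], [λ(t)μᵀ, λ(t)]]` with `Σ`
and `μ` fixed and only `λ` varying, `tr(Σ̃' Σ̃⁻¹ Σ̃' Σ̃⁻¹) = (λ'/λ)²`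
(the derivative `Σ̃'` is taken entrywise). -/
theorem block_metric_lambda_direction
    (M : ℕ) (S : Matrix (Fin M) (Fin M) ℝ) (hS : S.PosDef)
    (μ : Fin M → ℝ)
    (l : ℝ → ℝ) (dl : ℝ) (t₀ : ℝ)
    (hlpos : 0 < l t₀)
    (hl : HasDerivAt l dl t₀)
    (St : ℝ → Matrix (Fin M ⊕ Fin 1) (Fin M ⊕ Fin 1) ℝ)
    (hSt : ∀ t, St t =
      Matrix.fromBlocks (S + l t • (Matrix.replicateCol (Fin 1) μ * Matrix.replicateRow (Fin 1) μ))
        (l t • Matrix.replicateCol (Fin 1) μ) (l t • Matrix.replicateRow (Fin 1) μ)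
        (l t • (1 : Matrix (Fin 1) (Fin 1) ℝ)))
    (D : Matrix (Fin M ⊕ Fin 1) (Fin M ⊕ Fin 1) ℝ)
    (hD : ∀ i j, HasDerivAt (fun t => St t i j) (D i j) t₀) :
    (D * (St t₀)⁻¹ * D * (St t₀)⁻¹).trace = (dl / l t₀) ^ 2 := by
  set v : Fin M ⊕ Fin 1 → ℝ := Sum.elim μ 1
  have hDv : D = dl • vecMulVec v v :=
    eq_smul_of_hasDerivAt_apply (fun t => (hSt t).trans (blockCov_eq_add_smul_vecMulVec S μ (l t)))
      hl hD
  have hSt₀ : St t₀ = blockCov S μ (l t₀) := hSt t₀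
  simp only [hDv, hSt₀, smul_mul, Matrix.mul_smul, trace_smul, smul_smul]
  rw [trace_vecMulVec_mul_vecMulVec_mul, dotProduct_inv_blockCov_mulVec hS.det_pos.ne' μ hlpos.ne',
    smul_eq_mul]
  ring
end

section
/- If only Σ varies (μ' = 0, λ' = 0) in Σ̃ = [[Σ + λ μ μ^T, λμ],[λμ^T, λ]], then tr(Σ̃' Σ̃^{-1} Σ̃' Σ̃^{-1}) = tr(Σ' Σ^{-1} Σ' Σ^{-1}). -/
/-!
Write `Σ̃ = U · diag(Σ, λ) · L` with the unipotent block-triangular factors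
`U = [[1, μ], [0, 1]]` and `L = [[1, 0], [μᵀ, 1]]`. Since only `Σ` moves,
`Σ̃' = [[Σ', 0], [0, 0]]`, and this matrix is unchanged by `X ↦ U⁻¹ X L⁻¹`.
Cyclicity of the trace therefore removes `U` and `L`, leaving
`tr(Σ̃' diag(Σ, λ)⁻¹ Σ̃' diag(Σ, λ)⁻¹)`, in which only the top-left block `Σ⁻¹`
of `diag(Σ, λ)⁻¹` is seen.
-/

open Matrix

namespace Matrix

variable {m n R : Type*} [Fintype m] [Fintype n]

theorem trace_fromBlocks [AddCommMonoid R] (A : Matrix m m R) (B : Matrix m n R)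
    (C : Matrix n m R) (D : Matrix n n R) :
    (fromBlocks A B C D).trace = A.trace + D.trace := by
  simp [trace, Fintype.sum_sum_type]

theorem trace_fromBlocks_mul_mul_fromBlocks_mul [NonUnitalNonAssocSemiring R]
    (X : Matrix m m R) (Y : Matrix (m ⊕ n) (m ⊕ n) R) :
    (fromBlocks X 0 0 0 * Y * fromBlocks X 0 0 0 * Y).trace
      = (X * Y.toBlocks₁₁ * X * Y.toBlocks₁₁).trace := by
  rw [← fromBlocks_toBlocks Y]
  simp [fromBlocks_multiply, trace_fromBlocks]

variable [DecidableEq m] [DecidableEq n]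

theorem fromBlocks_add_mul_mul_eq [Ring R] (A : Matrix m m R) (B : Matrix m n R)
    (C : Matrix n m R) (D : Matrix n n R) :
    fromBlocks (A + B * D * C) (B * D) (D * C) D
      = fromBlocks 1 B 0 1 * fromBlocks A 0 0 D * fromBlocks 1 0 C 1 := by
  simp [fromBlocks_multiply, Matrix.mul_assoc]

variable [CommRing R]

theorem trace_mul_inv_mul_inv_of_inv_mul_mul_inv {E U Δ L : Matrix n n R}
    (hE : U⁻¹ * E * L⁻¹ = E) :
    (E * (U * Δ * L)⁻¹ * E * (U * Δ * L)⁻¹).trace = (E * Δ⁻¹ * E * Δ⁻¹).trace := by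
  calc (E * (U * Δ * L)⁻¹ * E * (U * Δ * L)⁻¹).trace
      = (E * L⁻¹ * Δ⁻¹ * (U⁻¹ * E * L⁻¹) * Δ⁻¹ * U⁻¹).trace := by
        simp only [Matrix.mul_inv_rev, Matrix.mul_assoc]
    _ = (U⁻¹ * E * L⁻¹ * Δ⁻¹ * (U⁻¹ * E * L⁻¹) * Δ⁻¹).trace := by
        rw [trace_mul_comm]; simp only [Matrix.mul_assoc]
    _ = (E * Δ⁻¹ * E * Δ⁻¹).trace := by rw [hE]

theorem inv_mul_fromBlocks_mul_inv (A : Matrix m m R) (B : Matrix m n R) (C : Matrix n m R) :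
    (fromBlocks 1 B 0 1 : Matrix (m ⊕ n) (m ⊕ n) R)⁻¹ * fromBlocks A 0 0 0
      * (fromBlocks 1 0 C 1)⁻¹ = fromBlocks A 0 0 0 := by
  rw [inv_fromBlocks_zero₂₁_of_isUnit_iff _ _ _ (by simp),
    inv_fromBlocks_zero₁₂_of_isUnit_iff _ _ _ (by simp)]
  simp [fromBlocks_multiply]

theorem toBlocks₁₁_inv_fromBlocks_zero_zero (A : Matrix m m R) {D : Matrix n n R}
    (hD : IsUnit D) : (fromBlocks A 0 0 D)⁻¹.toBlocks₁₁ = A⁻¹ := by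
  by_cases hA : IsUnit A
  · rw [inv_fromBlocks_zero₁₂_of_isUnit_iff _ _ _ (iff_of_true hA hD), toBlocks_fromBlocks₁₁]
  -- both inverses are the junk value `0`
  · have hdet : ¬IsUnit (fromBlocks A 0 0 D).det := by
      rw [det_fromBlocks_zero₁₂, IsUnit.mul_iff, ← isUnit_iff_isUnit_det,
        ← isUnit_iff_isUnit_det]
      exact fun h => hA h.1
    rw [nonsing_inv_apply_not_isUnit _ hdet,
      nonsing_inv_apply_not_isUnit _ (by rwa [← isUnit_iff_isUnit_det])]
    rfl

end Matrix

theorem eq_fromBlocks_of_hasDerivAt_fromBlocks_add_const {m n : Type*}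
    {S : ℝ → Matrix m m ℝ} {dS : Matrix m m ℝ} {t₀ : ℝ}
    (hS : ∀ i j, HasDerivAt (fun t => S t i j) (dS i j) t₀)
    (K : Matrix m m ℝ) (B : Matrix m n ℝ) (C : Matrix n m ℝ) (E : Matrix n n ℝ)
    {D : Matrix (m ⊕ n) (m ⊕ n) ℝ}
    (hD : ∀ i j, HasDerivAt (fun t => fromBlocks (S t + K) B C E i j) (D i j) t₀) :
    D = fromBlocks dS 0 0 0 := by
  ext (i | i) (j | j)
  · exact (hD _ _).unique ((hS i j).add_const (K i j))
  · exact (hD _ _).unique (hasDerivAt_const t₀ (B i j))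
  · exact (hD _ _).unique (hasDerivAt_const t₀ (C i j))
  · exact (hD _ _).unique (hasDerivAt_const t₀ (E i j))

theorem block_metric_covariance_direction_general
    (M : ℕ) (Sc : ℝ → Matrix (Fin M) (Fin M) ℝ)
    (dS : Matrix (Fin M) (Fin M) ℝ) (t₀ : ℝ)
    (hdS : ∀ i j, HasDerivAt (fun t => Sc t i j) (dS i j) t₀)
    (μ : Fin M → ℝ) (l : ℝ) (hl : 0 < l)
    (St : ℝ → Matrix (Fin M ⊕ Fin 1) (Fin M ⊕ Fin 1) ℝ)
    (hSt : ∀ t, St t =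
      Matrix.fromBlocks (Sc t + l • (Matrix.replicateCol (Fin 1) μ * Matrix.replicateRow (Fin 1) μ))
        (l • Matrix.replicateCol (Fin 1) μ) (l • Matrix.replicateRow (Fin 1) μ)
        (l • (1 : Matrix (Fin 1) (Fin 1) ℝ)))
    (D : Matrix (Fin M ⊕ Fin 1) (Fin M ⊕ Fin 1) ℝ)
    (hD : ∀ i j, HasDerivAt (fun t => St t i j) (D i j) t₀) :
    (D * (St t₀)⁻¹ * D * (St t₀)⁻¹).trace
      = (dS * (Sc t₀)⁻¹ * dS * (Sc t₀)⁻¹).trace := by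
  set u := replicateCol (Fin 1) μ
  set v := replicateRow (Fin 1) μ
  set Λ : Matrix (Fin 1) (Fin 1) ℝ := l • 1
  have hSt' : ∀ t, St t = fromBlocks (Sc t + u * Λ * v) (u * Λ) (Λ * v) Λ := by
    intro t
    simp only [hSt, Λ, Matrix.mul_smul, Matrix.smul_mul, Matrix.mul_one, Matrix.one_mul]
  have hDblock : D = fromBlocks dS 0 0 0 :=
    eq_fromBlocks_of_hasDerivAt_fromBlocks_add_const hdS (u * Λ * v) (u * Λ) (Λ * v) Λ
      (by simpa only [hSt'] using hD)
  have hΛ : IsUnit Λ := isUnit_one.smul (Units.mk0 l hl.ne')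
  rw [hDblock, hSt', fromBlocks_add_mul_mul_eq,
    trace_mul_inv_mul_inv_of_inv_mul_mul_inv (inv_mul_fromBlocks_mul_inv _ _ _),
    trace_fromBlocks_mul_mul_fromBlocks_mul, toBlocks₁₁_inv_fromBlocks_zero_zero _ hΛ]

/-- For the curve `t ↦ Σ̃(t) = [[Σ(t) + λ μ μᵀ, λμ], [λμᵀ, λ]]` with `μ` and `λ`
fixed and only `Σ` varying, `tr(Σ̃' Σ̃⁻¹ Σ̃' Σ̃⁻¹) = tr(Σ' Σ⁻¹ Σ' Σ⁻¹)`
(derivatives taken entrywise). -/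
theorem block_metric_covariance_direction
    (M : ℕ) (Sc : ℝ → Matrix (Fin M) (Fin M) ℝ)
    (dS : Matrix (Fin M) (Fin M) ℝ) (t₀ : ℝ)
    (hSc : ∀ t, (Sc t).PosDef)
    (hdS : ∀ i j, HasDerivAt (fun t => Sc t i j) (dS i j) t₀)
    (μ : Fin M → ℝ) (l : ℝ) (hl : 0 < l)
    (St : ℝ → Matrix (Fin M ⊕ Fin 1) (Fin M ⊕ Fin 1) ℝ)
    (hSt : ∀ t, St t =
      Matrix.fromBlocks (Sc t + l • (Matrix.replicateCol (Fin 1) μ * Matrix.replicateRow (Fin 1) μ))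
        (l • Matrix.replicateCol (Fin 1) μ) (l • Matrix.replicateRow (Fin 1) μ)
        (l • (1 : Matrix (Fin 1) (Fin 1) ℝ)))
    (D : Matrix (Fin M ⊕ Fin 1) (Fin M ⊕ Fin 1) ℝ)
    (hD : ∀ i j, HasDerivAt (fun t => St t i j) (D i j) t₀) :
    (D * (St t₀)⁻¹ * D * (St t₀)⁻¹).trace
      = (dS * (Sc t₀)⁻¹ * dS * (Sc t₀)⁻¹).trace :=
  block_metric_covariance_direction_general M Sc dS t₀ hdS μ l hl St hSt D hD
end

section
/- Let f(Σ) = tr(Σ^{-1} S) on symmetric positive definite M×M matrices with S symmetric positive definite. Then f is strictly convex along the curve Σ(t) = Σ_0^{1/2} (Σ_0^{-1/2} Σ_1 Σ_0^{-1/2})^t Σ_0^{1/2} (the geodesic between distinct Σ_0, Σ_1), i.e., geodesically strictly convex: f(Σ(t)) < (1-t)f(Σ_0) + t f(Σ_1) for t ∈ (0,1) when Σ_0 ≠ Σ_1. -/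
open Matrix

open scoped ComplexOrder in
/-- The positive semidefinite square root of a positive semidefinite matrix
(the definition `Matrix.PosSemidef.sqrt` of the older Mathlib, since removed). -/
noncomputable def Matrix.PosSemidef.sqrt {n 𝕜 : Type*} [Fintype n] [RCLike 𝕜] [DecidableEq n]
    {A : Matrix n n 𝕜} (hA : A.PosSemidef) : Matrix n n 𝕜 :=
  hA.1.eigenvectorUnitary.1 * diagonal ((↑) ∘ Real.sqrt ∘ hA.1.eigenvalues) *
    (star hA.1.eigenvectorUnitary : Matrix n n 𝕜)

/-! Write `Q = Σ₀^{1/2}` and `G = Q⁻¹ Σ₁ Q⁻¹ = U diag(d) U*`, with all `dᵢ > 0`. Then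
`Σ(t) = Q G^t Q`, so `Σ(t)⁻¹ = Q⁻¹ G^{-t} Q⁻¹` and `tr(Σ(t)⁻¹ S) = ∑ᵢ (dᵢ⁻¹)^t cᵢ` with
`cᵢ = (U* Q⁻¹ S Q⁻¹ U)ᵢᵢ > 0`; the cases `t = 0, 1` are `tr(Σ₀⁻¹ S)` and `tr(Σ₁⁻¹ S)`.
Termwise, Bernoulli's inequality gives `b^t ≤ (1 - t) + t b`, strictly unless `b = 1`; and some
`dᵢ ≠ 1`, since otherwise `G = 1` and `Σ₁ = Σ₀`. -/

namespace Matrix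

open scoped ComplexOrder

variable {n 𝕜 : Type*} [Fintype n] [DecidableEq n] [RCLike 𝕜]

namespace IsHermitian

variable {A : Matrix n n 𝕜} (hA : A.IsHermitian)

lemma cfc_mul (f g : ℝ → ℝ) : hA.cfc (fun x ↦ f x * g x) = hA.cfc f * hA.cfc g := by
  simp only [IsHermitian.cfc, ← map_mul, diagonal_mul_diagonal]
  congr 2
  funext i
  simp

lemma cfc_congr {f g : ℝ → ℝ} (h : ∀ i, f (hA.eigenvalues i) = g (hA.eigenvalues i)) :
    hA.cfc f = hA.cfc g := by
  simp only [IsHermitian.cfc]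
  congr 2
  funext i
  simp [h i]

lemma cfc_id' : hA.cfc (fun x ↦ x) = A :=
  hA.spectral_theorem.symm

lemma cfc_const_one : hA.cfc (fun _ ↦ 1) = 1 := by
  simp [IsHermitian.cfc, Function.comp_def, -Unitary.conjStarAlgAut_apply]

lemma isHermitian_cfc (f : ℝ → ℝ) : (hA.cfc f).IsHermitian :=
  hA.cfc_eq f ▸ cfc_predicate f A

lemma inv_cfc_eq {f g : ℝ → ℝ} (h : ∀ i, f (hA.eigenvalues i) * g (hA.eigenvalues i) = 1) :
    (hA.cfc f)⁻¹ = hA.cfc g :=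
  inv_eq_right_inv (by rw [← hA.cfc_mul, hA.cfc_congr (g := fun _ ↦ 1) h, cfc_const_one])

lemma trace_cfc_mul (f : ℝ → ℝ) (B : Matrix n n 𝕜) :
    (hA.cfc f * B).trace = ∑ i, f (hA.eigenvalues i) *
      (star (hA.eigenvectorUnitary : Matrix n n 𝕜) * B * hA.eigenvectorUnitary) i i := by
  rw [IsHermitian.cfc, Unitary.conjStarAlgAut_apply, mul_assoc, mul_assoc, trace_mul_comm,
    mul_assoc]
  simp only [trace, diag, diagonal_mul, Function.comp_apply]

lemma trace_inv_mul_cfc_rpow_mul_mul (hpos : ∀ i, 0 < hA.eigenvalues i) (Q B : Matrix n n 𝕜)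
    (s : ℝ) :
    ((Q * hA.cfc (· ^ s) * Q)⁻¹ * B).trace = ∑ i, (((hA.eigenvalues i)⁻¹ ^ s : ℝ) : 𝕜) *
      (star (hA.eigenvectorUnitary : Matrix n n 𝕜) * (Q⁻¹ * B * Q⁻¹) * hA.eigenvectorUnitary) i i := by
  have hinv : (hA.cfc (· ^ s))⁻¹ = hA.cfc (fun x ↦ x⁻¹ ^ s) := hA.inv_cfc_eq fun i ↦ by
    rw [← Real.mul_rpow (hpos i).le (inv_nonneg.2 (hpos i).le), mul_inv_cancel₀ (hpos i).ne',
      Real.one_rpow]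
  rw [Matrix.mul_inv_rev, Matrix.mul_inv_rev, hinv, mul_assoc, trace_mul_comm, mul_assoc,
    mul_assoc, ← mul_assoc Q⁻¹ B, hA.trace_cfc_mul]

lemma exists_eigenvalues_ne_one (h : A ≠ 1) : ∃ i, hA.eigenvalues i ≠ 1 := by
  by_contra! h1
  exact h (by rw [← hA.cfc_id', hA.cfc_congr (g := fun _ ↦ 1) h1, cfc_const_one])

end IsHermitian

lemma PosSemidef.sqrt_eq_cfc {A : Matrix n n 𝕜} (hA : A.PosSemidef) :
    hA.sqrt = hA.1.cfc Real.sqrt := by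
  rw [IsHermitian.cfc, Unitary.conjStarAlgAut_apply]
  rfl

lemma PosSemidef.sqrt_mul_self {A : Matrix n n 𝕜} (hA : A.PosSemidef) :
    hA.sqrt * hA.sqrt = A := by
  rw [hA.sqrt_eq_cfc, ← hA.1.cfc_mul]
  exact (hA.1.cfc_congr fun i ↦ Real.mul_self_sqrt (hA.eigenvalues_nonneg i)).trans hA.1.cfc_id'

lemma PosSemidef.isHermitian_sqrt {A : Matrix n n 𝕜} (hA : A.PosSemidef) :
    hA.sqrt.IsHermitian :=
  hA.sqrt_eq_cfc ▸ hA.1.isHermitian_cfc _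

lemma PosDef.mul_mul_of_isHermitian {A B : Matrix n n 𝕜} (hA : A.PosDef) (hB : B.IsHermitian)
    (hBu : IsUnit B) : (B * A * B).PosDef := by
  simpa only [star_eq_conjTranspose, hB.eq] using hBu.posDef_star_left_conjugate_iff.mpr hA

end Matrix

lemma rpow_le_one_sub_add_mul {b t : ℝ} (hb : 0 ≤ b) (ht0 : 0 ≤ t) (ht1 : t ≤ 1) :
    b ^ t ≤ 1 - t + t * b := by
  have := rpow_one_add_le_one_add_mul_self (s := b - 1) (by linarith) ht0 ht1
  rw [add_sub_cancel] at this
  linarith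

lemma rpow_lt_one_sub_add_mul {b t : ℝ} (hb : 0 ≤ b) (hb1 : b ≠ 1) (ht0 : 0 < t) (ht1 : t < 1) :
    b ^ t < 1 - t + t * b := by
  have := rpow_one_add_lt_one_add_mul_self (s := b - 1) (by linarith) (sub_ne_zero.mpr hb1) ht0 ht1
  rw [add_sub_cancel] at this
  linarith

lemma sum_rpow_mul_lt_of_exists_ne_one {ι : Type*} [Fintype ι] {b c : ι → ℝ} (hb : ∀ i, 0 ≤ b i)
    (hc : ∀ i, 0 < c i) (hb1 : ∃ i, b i ≠ 1) {t : ℝ} (ht0 : 0 < t) (ht1 : t < 1) :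
    ∑ i, b i ^ t * c i < (1 - t) * ∑ i, c i + t * ∑ i, b i * c i := by
  obtain ⟨j, hj⟩ := hb1
  rw [Finset.mul_sum, Finset.mul_sum, ← Finset.sum_add_distrib]
  refine Finset.sum_lt_sum (fun i _ ↦ ?_) ⟨j, Finset.mem_univ j, ?_⟩
  · nlinarith [rpow_le_one_sub_add_mul (hb i) ht0.le ht1.le, hc i]
  · nlinarith [rpow_lt_one_sub_add_mul (hb j) hj ht0 ht1, hc j]

lemma Matrix.mul_mul_nonsing_inv_mul_mul {n R : Type*} [Fintype n] [DecidableEq n] [CommRing R]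
    {Q : Matrix n n R} (hQ : IsUnit Q) (A : Matrix n n R) : Q * (Q⁻¹ * A * Q⁻¹) * Q = A := by
  have hQdet := (isUnit_iff_isUnit_det Q).mp hQ
  rw [← mul_assoc, ← mul_assoc, mul_nonsing_inv Q hQdet, one_mul, mul_assoc,
    nonsing_inv_mul Q hQdet, mul_one]

theorem trace_inv_geodesically_strictly_convex_general
    (M : ℕ)
    (S S0 S1 : Matrix (Fin M) (Fin M) ℝ)
    (hS : S.PosDef) (hS0 : S0.PosDef) (hS1 : S1.PosDef)
    (hne : S0 ≠ S1)
    (Q : Matrix (Fin M) (Fin M) ℝ) (hQ : Q = hS0.posSemidef.sqrt)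
    (hG : (Q⁻¹ * S1 * Q⁻¹).IsHermitian)
    (t : ℝ) (ht : t ∈ Set.Ioo (0 : ℝ) 1) :
    ((Q * hG.cfc (fun x : ℝ => x ^ t) * Q)⁻¹ * S).trace
      < (1 - t) * (S0⁻¹ * S).trace + t * (S1⁻¹ * S).trace := by
  obtain ⟨ht0, ht1⟩ := ht
  have hQQ : Q * Q = S0 := hQ ▸ hS0.posSemidef.sqrt_mul_self
  have hQu : IsUnit Q := isUnit_of_mul_isUnit_left (hQQ ▸ hS0.isUnit)
  have hQinv : Q⁻¹.IsHermitian := (hQ ▸ hS0.posSemidef.isHermitian_sqrt).inv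
  have hQinvu : IsUnit Q⁻¹ := isUnit_nonsing_inv_iff.mpr hQu
  set d := hG.eigenvalues
  set U := (hG.eigenvectorUnitary : Matrix (Fin M) (Fin M) ℝ)
  set c := fun i ↦ (star U * (Q⁻¹ * S * Q⁻¹) * U) i i
  have hd : ∀ i, 0 < d i := (hS1.mul_mul_of_isHermitian hQinv hQinvu).eigenvalues_pos
  have hc : ∀ i, 0 < c i := fun i ↦ (Unitary.isUnit_coe.posDef_star_left_conjugate_iff.mpr
    (hS.mul_mul_of_isHermitian hQinv hQinvu)).diag_pos
  have hF : ∀ s : ℝ, ((Q * hG.cfc (· ^ s) * Q)⁻¹ * S).trace = ∑ i, (d i)⁻¹ ^ s * c i :=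
    hG.trace_inv_mul_cfc_rpow_mul_mul hd Q S
  have hQGQ : Q * (Q⁻¹ * S1 * Q⁻¹) * Q = S1 := mul_mul_nonsing_inv_mul_mul hQu S1
  have hF0 : (S0⁻¹ * S).trace = ∑ i, c i := by simpa [hG.cfc_const_one, hQQ] using hF 0
  have hF1 : (S1⁻¹ * S).trace = ∑ i, (d i)⁻¹ * c i := by simpa [hG.cfc_id', hQGQ] using hF 1
  have hd1 : ∃ i, (d i)⁻¹ ≠ 1 :=
    (hG.exists_eigenvalues_ne_one fun h ↦ hne (by rw [← hQQ, ← hQGQ, h, mul_one])).imp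
      fun _ ↦ inv_ne_one.mpr
  rw [hF, hF0, hF1]
  exact sum_rpow_mul_lt_of_exists_ne_one (fun i ↦ (inv_pos.2 (hd i)).le) hc hd1 ht0 ht1

/-- `f(Σ) = tr(Σ⁻¹ S)` is strictly geodesically convex on the positive definite
cone: along the affine-invariant geodesic
`Σ(t) = Σ₀^{1/2} (Σ₀^{-1/2} Σ₁ Σ₀^{-1/2})^t Σ₀^{1/2}` between distinct `Σ₀, Σ₁`,
one has `f(Σ(t)) < (1-t) f(Σ₀) + t f(Σ₁)` for `t ∈ (0,1)`. The matrix power is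
taken via the continuous functional calculus of the Hermitian matrix
`Σ₀^{-1/2} Σ₁ Σ₀^{-1/2}`. -/
theorem trace_inv_geodesically_strictly_convex
    (M : ℕ) (hM : 1 ≤ M)
    (S S0 S1 : Matrix (Fin M) (Fin M) ℝ)
    (hS : S.PosDef) (hS0 : S0.PosDef) (hS1 : S1.PosDef)
    (hne : S0 ≠ S1)
    (Q : Matrix (Fin M) (Fin M) ℝ) (hQ : Q = hS0.posSemidef.sqrt)
    (hG : (Q⁻¹ * S1 * Q⁻¹).IsHermitian)
    (t : ℝ) (ht : t ∈ Set.Ioo (0 : ℝ) 1) :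
    ((Q * hG.cfc (fun x : ℝ => x ^ t) * Q)⁻¹ * S).trace
      < (1 - t) * (S0⁻¹ * S).trace + t * (S1⁻¹ * S).trace :=
  trace_inv_geodesically_strictly_convex_general M S S0 S1 hS hS0 hS1 hne Q hQ hG t ht
end
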